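/- arXiv:2206.11411 — 4 statements merged into one kernel-verified Lean document; each statement's English description precedes it below -/
import Mathlib

section
/- Let L be a k×k real matrix with the strong Perron–Frobenius property with dominant eigenvalue τ, and let x_0 ∈ ℝ^k be cyclic for L. Then for every coordinate index i and every integer s ≥ 0, the entry (L^n · x_0)_i is nonzero for all sufficiently large n, and the ratio (L^{n+s} · x_0)_i / (L^n · x_0)_i converges to τ^s as n → ∞. -/
open Matrix Polynomial Filter

/-- `L` has the strong Perron–Frobenius property with dominant eigenvalue `τ`:
`τ > 0`, `τ` is a simple root of the characteristic polynomial, every other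
complex root has modulus `< τ`, and `τ` has a strictly positive eigenvector. -/
def StrongPerronFrobenius {k : ℕ} (L : Matrix (Fin k) (Fin k) ℝ) (τ : ℝ) : Prop :=
  0 < τ ∧
  L.charpoly.rootMultiplicity τ = 1 ∧
  (∀ z : ℂ, (L.charpoly.map (algebraMap ℝ ℂ)).IsRoot z → z ≠ (τ : ℂ) →
    ‖z‖ < τ) ∧
  ∃ u : Fin k → ℝ, (∀ i, 0 < u i) ∧ L.mulVec u = τ • u

/-- `x₀` is a cyclic vector for `L`: `x₀, L x₀, …, L^{k-1} x₀` span `ℝ^k`. -/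
def IsCyclicVec {k : ℕ} (L : Matrix (Fin k) (Fin k) ℝ) (x0 : Fin k → ℝ) : Prop :=
  Submodule.span ℝ (Set.range fun j : Fin k => (L ^ (j : ℕ)).mulVec x0) = ⊤

/-!
Write `χ_L = (X - τ) q` with `q(τ) ≠ 0` and `a (X - τ) + b q = 1`. Then `e = b(L) q(L)` and
`p = a(L) (L - τ)` are complementary commuting idempotents, `L e = τ e`, and
`Lⁿ = τⁿ e + (L p)ⁿ p`. The matrix `L p` is annihilated by `X q`, so its spectrum lies in the open
disc of radius `τ`, and Gelfand's formula gives `(L p)ⁿ / τⁿ → 0`. Hence `Lⁿ x₀ / τⁿ → e x₀`.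
Since `τ` is a simple root, its eigenspace is the line through `u`, so `e x₀ = c u`; and `c ≠ 0`
because a matrix commuting with `L` that kills the cyclic vector `x₀` is zero, while `e u = u`.
As `u` has no zero entry, `(Lⁿ x₀)_i ~ c uᵢ τⁿ`, from which the ratio limit follows.
-/

open Topology NNReal

theorem Commute.mul_pow_mul_of_isIdempotentElem {M : Type*} [Monoid M] {a e : M}
    (hae : Commute a e) (he : IsIdempotentElem e) (n : ℕ) : (a * e) ^ n * e = a ^ n * e := by
  rw [hae.mul_pow, mul_assoc, ← pow_succ, he.pow_succ_eq]

theorem Commute.aeval_mul_mul_of_isIdempotentElem {R S : Type*} [CommSemiring R] [Semiring S]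
    [Algebra R S] {a e : S} (hae : Commute a e) (he : IsIdempotentElem e) (p : R[X]) :
    aeval (a * e) p * e = aeval a p * e := by
  simp only [aeval_eq_sum_range, Finset.sum_mul, smul_mul_assoc,
    hae.mul_pow_mul_of_isIdempotentElem he]

theorem Polynomial.commute_aeval {R S : Type*} [CommSemiring R] [Semiring S] [Algebra R S]
    (a : S) (p : R[X]) : Commute a (aeval a p) := by
  simpa using (commute_X p).map (aeval a)

theorem Polynomial.exists_eq_X_sub_C_mul_of_rootMultiplicity_eq_one {K : Type*} [Field K]
    {p : K[X]} {a : K} (hp : p ≠ 0) (h : p.rootMultiplicity a = 1) :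
    ∃ q : K[X], p = (X - C a) * q ∧ ¬ q.IsRoot a := by
  obtain ⟨q, hq, hdvd⟩ := exists_eq_pow_rootMultiplicity_mul_and_not_dvd p hp a
  exact ⟨q, by rwa [h, pow_one] at hq, fun hq' => hdvd (dvd_iff_isRoot.mpr hq')⟩

theorem Polynomial.norm_lt_of_isRoot_map_of_eq_X_sub_C_mul {χ q : ℝ[X]} {τ : ℝ}
    (hχ : χ = (X - C τ) * q) (hqτ : ¬ q.IsRoot τ)
    (hroots : ∀ z : ℂ, (χ.map (algebraMap ℝ ℂ)).IsRoot z → z ≠ τ → ‖z‖ < τ)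
    {z : ℂ} (hz : (q.map (algebraMap ℝ ℂ)).IsRoot z) : ‖z‖ < τ := by
  refine hroots z (by simp [hχ, hz.eq_zero]) fun hzτ => hqτ ?_
  rw [IsRoot, hzτ, ← Complex.coe_algebraMap, eval_map_algebraMap, aeval_algebraMap_apply] at hz
  simpa using hz

theorem spectrum.isRoot_of_aeval_eq_zero {𝕜 A : Type*} [Field 𝕜] [Ring A] [Algebra 𝕜 A]
    {a : A} {p : 𝕜[X]} (h : aeval a p = 0) {z : 𝕜} (hz : z ∈ spectrum 𝕜 a) : p.IsRoot z := by
  rcases subsingleton_or_nontrivial A with hA | hA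
  · simp at hz
  simpa [h, spectrum.zero_eq] using spectrum.subset_polynomial_aeval a p ⟨z, hz, rfl⟩

section GelfandFormula

variable {A : Type*} [NormedRing A] [NormedAlgebra ℂ A] [CompleteSpace A] {a : A}

theorem spectralRadius_lt_of_forall_nnnorm_lt {r : ℝ≥0} (hr : 0 < r)
    (h : ∀ z ∈ spectrum ℂ a, ‖z‖₊ < r) : spectralRadius ℂ a < r := by
  rcases (spectrum ℂ a).eq_empty_or_nonempty with ha | ha
  · simpa [spectralRadius, ha] using hr
  · exact spectrum.spectralRadius_lt_of_forall_lt_of_nonempty ha h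

theorem eventually_nnnorm_pow_le_of_spectralRadius_lt {ρ : ℝ≥0} (h : spectralRadius ℂ a < ρ) :
    ∀ᶠ n : ℕ in atTop, ‖a ^ n‖₊ ≤ ρ ^ n := by
  filter_upwards [(spectrum.pow_nnnorm_pow_one_div_tendsto_nhds_spectralRadius a).eventually
    (gt_mem_nhds h), eventually_ne_atTop 0] with n hn hn0
  rw [one_div, ← ENNReal.coe_rpow_of_nonneg _ (by positivity), ENNReal.coe_lt_coe] at hn
  rw [← NNReal.rpow_inv_natCast_pow ‖a ^ n‖₊ hn0]
  exact pow_le_pow_left₀ zero_le hn.le n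

theorem tendsto_norm_pow_div_pow_of_spectralRadius_lt {r : ℝ≥0} (h : spectralRadius ℂ a < r) :
    Tendsto (fun n : ℕ => ‖a ^ n‖ / r ^ n) atTop (𝓝 0) := by
  obtain ⟨ρ, haρ, hρr⟩ := ENNReal.lt_iff_exists_nnreal_btwn.mp h
  have hr : 0 < (r : ℝ) := ρ.coe_nonneg.trans_lt (mod_cast hρr)
  have hpow : ∀ᶠ n : ℕ in atTop, ‖a ^ n‖ / r ^ n ≤ ((ρ : ℝ) / r) ^ n := by
    filter_upwards [eventually_nnnorm_pow_le_of_spectralRadius_lt haρ] with n hn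
    rw [div_pow, div_le_div_iff_of_pos_right (by positivity)]
    exact_mod_cast hn
  exact squeeze_zero' (.of_forall fun n => by positivity) hpow
    (tendsto_pow_atTop_nhds_zero_of_lt_one (by positivity) ((div_lt_one hr).mpr (mod_cast hρr)))

end GelfandFormula

namespace Matrix

section LinftyOpNorm

attribute [local instance] Matrix.linftyOpNormedRing Matrix.linftyOpNormedAlgebra

variable {ι : Type*} [Fintype ι] [DecidableEq ι]

theorem linfty_opNNNorm_map_ofReal (A : Matrix ι ι ℝ) : ‖A.map ((↑) : ℝ → ℂ)‖₊ = ‖A‖₊ := by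
  simp [linfty_opNNNorm_def]

theorem tendsto_inv_pow_smul_pow_of_aeval_eq_zero {A : Matrix ι ι ℝ} {p : ℝ[X]}
    (hA : aeval A p = 0) {r : ℝ} (hr : 0 < r)
    (hp : ∀ z : ℂ, (p.map (algebraMap ℝ ℂ)).IsRoot z → ‖z‖ < r) :
    Tendsto (fun n : ℕ => (r ^ n)⁻¹ • A ^ n) atTop (𝓝 0) := by
  set Ac := (algebraMap ℝ ℂ).mapMatrix A
  have hAc : aeval Ac (p.map (algebraMap ℝ ℂ)) = 0 := by
    rw [aeval_map_algebraMap, show Ac = (Algebra.ofId ℝ ℂ).mapMatrix A from rfl,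
      aeval_algHom_apply, hA, map_zero]
  have hrad : spectralRadius ℂ Ac < r.toNNReal :=
    spectralRadius_lt_of_forall_nnnorm_lt (by simpa using hr) fun z hz => by
      simpa [← NNReal.coe_lt_coe, hr.le] using hp z (spectrum.isRoot_of_aeval_eq_zero hAc hz)
  refine tendsto_zero_iff_norm_tendsto_zero.mpr
    ((tendsto_norm_pow_div_pow_of_spectralRadius_lt hrad).congr fun n => ?_)
  rw [norm_smul, ← map_pow, ← coe_nnnorm, ← coe_nnnorm (A ^ n)]
  simp [linfty_opNNNorm_map_ofReal, max_eq_left hr.le, abs_of_pos hr, div_eq_inv_mul]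

end LinftyOpNorm

section Eigenvectors

variable {K ι : Type*} [Field K] [Fintype ι] [DecidableEq ι] {A : Matrix ι ι K} {τ : K}
  {u : ι → K}

theorem aeval_mulVec_of_mulVec_eq_smul (hu0 : u ≠ 0) (hu : A *ᵥ u = τ • u) (p : K[X]) :
    aeval A p *ᵥ u = p.eval τ • u := by
  have hA : Module.End.HasEigenvector (toLin' A) τ u :=
    ⟨by simpa [Module.End.mem_eigenspace_iff] using hu, hu0⟩
  have := Module.End.aeval_apply_of_hasEigenvector (p := p) hA
  rwa [show toLin' A = toLinAlgEquiv' A from rfl, aeval_algHom_apply] at this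

theorem exists_eq_smul_of_rootMultiplicity_le_one (hmult : A.charpoly.rootMultiplicity τ ≤ 1)
    {v : ι → K} (hu0 : u ≠ 0) (hu : A *ᵥ u = τ • u) (hv : A *ᵥ v = τ • v) :
    ∃ c : K, v = c • u := by
  set E := Module.End.eigenspace (toLin' A) τ
  have huE : u ∈ E := by simpa [E, Module.End.mem_eigenspace_iff] using hu
  have hvE : v ∈ E := by simpa [E, Module.End.mem_eigenspace_iff] using hv
  have hE : Module.finrank K E = 1 :=
    le_antisymm ((LinearMap.finrank_eigenspace_le _ τ).trans (by rwa [charpoly_toLin']))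
      (Submodule.one_le_finrank_iff.mpr ((Submodule.ne_bot_iff E).mpr ⟨u, huE, hu0⟩))
  obtain ⟨c, hc⟩ :=
    (finrank_eq_one_iff_of_nonzero' (⟨u, huE⟩ : E) (by simpa using hu0)).mp hE ⟨v, hvE⟩
  exact ⟨c, congrArg Subtype.val hc.symm⟩

end Eigenvectors

section SimpleRoot

variable {K ι : Type*} [CommRing K] [Fintype ι] [DecidableEq ι] {A : Matrix ι ι K} {τ : K}

theorem aeval_eq_zero_of_charpoly_dvd {f : K[X]} (h : A.charpoly ∣ f) : aeval A f = 0 := by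
  obtain ⟨g, rfl⟩ := h
  rw [map_mul, aeval_self_charpoly, zero_mul]

theorem mul_aeval_eq_smul_of_charpoly_dvd {f : K[X]} (h : A.charpoly ∣ (X - C τ) * f) :
    A * aeval A f = τ • aeval A f := by
  have := aeval_eq_zero_of_charpoly_dvd h
  rwa [map_mul, map_sub, aeval_X, aeval_C, Algebra.algebraMap_eq_smul_one, sub_mul,
    smul_one_mul, sub_eq_zero] at this

variable {q a b : K[X]} (hχ : A.charpoly = (X - C τ) * q) (hab : a * (X - C τ) + b * q = 1)
include hχ hab

theorem isIdempotentElem_aeval_mul_X_sub_C : IsIdempotentElem (aeval A (a * (X - C τ))) := by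
  have : A.charpoly ∣ a * (X - C τ) * (a * (X - C τ)) - a * (X - C τ) :=
    ⟨-(a * b), by linear_combination (a * (X - C τ)) * hab + (a * b) * hχ⟩
  simpa [IsIdempotentElem, sub_eq_zero] using aeval_eq_zero_of_charpoly_dvd this

theorem aeval_mul_aeval_X_mul_eq_zero : aeval (A * aeval A (a * (X - C τ))) (X * q) = 0 := by
  set e := aeval A (a * (X - C τ))
  have hAe : Commute A e := commute_aeval A _
  calc aeval (A * e) (X * q) = aeval (A * e) q * e * A := by
        rw [mul_comm X q, map_mul, aeval_X, mul_assoc, hAe.eq]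
    _ = aeval A (q * (a * (X - C τ)) * X) := by
        rw [hAe.aeval_mul_mul_of_isIdempotentElem (isIdempotentElem_aeval_mul_X_sub_C hχ hab),
          map_mul, map_mul, aeval_X]
    _ = 0 := aeval_eq_zero_of_charpoly_dvd ⟨a * X, by rw [hχ]; ring⟩

theorem pow_eq_smul_add_pow_mul (n : ℕ) :
    A ^ n = τ ^ n • aeval A (b * q) +
      (A * aeval A (a * (X - C τ))) ^ n * aeval A (a * (X - C τ)) := by
  have he : aeval A (b * q) + aeval A (a * (X - C τ)) = 1 := by
    rw [← map_add, add_comm, hab, map_one]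
  have hE : A * aeval A (b * q) = τ • aeval A (b * q) :=
    mul_aeval_eq_smul_of_charpoly_dvd ⟨b, by rw [hχ]; ring⟩
  have hEpow : ∀ n : ℕ, A ^ n * aeval A (b * q) = τ ^ n • aeval A (b * q) := by
    intro n
    induction n with
    | zero => simp
    | succ n ih => rw [pow_succ, mul_assoc, hE, mul_smul_comm, ih, smul_smul, ← pow_succ']
  rw [(commute_aeval A _).mul_pow_mul_of_isIdempotentElem
    (isIdempotentElem_aeval_mul_X_sub_C hχ hab), ← hEpow, ← mul_add, he, mul_one]

end SimpleRoot

theorem tendsto_inv_pow_smul_pow_of_charpoly_eq_X_sub_C_mul {ι : Type*} [Fintype ι]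
    [DecidableEq ι] {A : Matrix ι ι ℝ} {τ : ℝ} {q a b : ℝ[X]} (hχ : A.charpoly = (X - C τ) * q)
    (hab : a * (X - C τ) + b * q = 1) (hτ : 0 < τ)
    (hq : ∀ z : ℂ, (q.map (algebraMap ℝ ℂ)).IsRoot z → ‖z‖ < τ) :
    Tendsto (fun n : ℕ => (τ ^ n)⁻¹ • A ^ n) atTop (𝓝 (aeval A (b * q))) := by
  have hXq : ∀ z : ℂ, ((X * q).map (algebraMap ℝ ℂ)).IsRoot z → ‖z‖ < τ := by
    simp only [Polynomial.map_mul, map_X, IsRoot.def, eval_mul, eval_X, mul_eq_zero]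
    rintro z (rfl | hz)
    exacts [by simpa using hτ, hq z hz]
  have hdecay := ((tendsto_inv_pow_smul_pow_of_aeval_eq_zero
    (aeval_mul_aeval_X_mul_eq_zero hχ hab) hτ hXq).mul_const (aeval A (a * (X - C τ)))).const_add
    (aeval A (b * q))
  rw [zero_mul, add_zero] at hdecay
  refine hdecay.congr fun n => ?_
  rw [pow_eq_smul_add_pow_mul hχ hab n, smul_add, smul_smul, inv_mul_cancel₀ (by positivity),
    one_smul, smul_mul_assoc]

end Matrix

theorem IsCyclicVec.eq_zero_of_commute {k : ℕ} {L B : Matrix (Fin k) (Fin k) ℝ}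
    {x0 : Fin k → ℝ} (hx0 : IsCyclicVec L x0) (hBL : Commute B L) (hB : B *ᵥ x0 = 0) :
    B = 0 := by
  have : B.mulVecLin = 0 := LinearMap.ext_on_range hx0 fun j => by
    simp only [mulVecLin_apply, LinearMap.zero_apply]
    rw [mulVec_mulVec, (hBL.pow_right j).eq, ← mulVec_mulVec, hB, mulVec_zero]
  exact toLin'.injective (by rw [map_zero]; exact this)

theorem IsCyclicVec.exists_aeval_mulVec_eq_smul {k : ℕ} {L : Matrix (Fin k) (Fin k) ℝ}
    {x0 : Fin k → ℝ} (hx0 : IsCyclicVec L x0) {τ : ℝ}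
    (hmult : L.charpoly.rootMultiplicity τ ≤ 1) {u : Fin k → ℝ} (hu0 : u ≠ 0)
    (hLu : L *ᵥ u = τ • u) {f : ℝ[X]} (hf : L.charpoly ∣ (X - C τ) * f) (hfτ : f.eval τ ≠ 0) :
    ∃ c : ℝ, c ≠ 0 ∧ aeval L f *ᵥ x0 = c • u := by
  obtain ⟨c, hc⟩ := exists_eq_smul_of_rootMultiplicity_le_one hmult hu0 hLu (v := aeval L f *ᵥ x0)
    (by rw [mulVec_mulVec, mul_aeval_eq_smul_of_charpoly_dvd hf, smul_mulVec])
  refine ⟨c, ?_, hc⟩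
  rintro rfl
  have hf0 : aeval L f = 0 := hx0.eq_zero_of_commute (commute_aeval L f).symm (by simpa using hc)
  have hfu := aeval_mulVec_of_mulVec_eq_smul hu0 hLu f
  rw [hf0, zero_mulVec, eq_comm, smul_eq_zero] at hfu
  exact hfu.elim hfτ hu0

theorem eventually_ne_zero_and_tendsto_div_of_tendsto_div_pow {𝕜 : Type*} [NormedField 𝕜]
    {f : ℕ → 𝕜} {τ d : 𝕜} (hτ : τ ≠ 0) (hd : d ≠ 0)
    (hf : Tendsto (fun n => f n / τ ^ n) atTop (𝓝 d)) (s : ℕ) :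
    (∀ᶠ n in atTop, f n ≠ 0) ∧ Tendsto (fun n => f (n + s) / f n) atTop (𝓝 (τ ^ s)) := by
  have hne : ∀ᶠ n in atTop, f n ≠ 0 :=
    (hf.eventually_ne hd).mono fun n hn h => hn (by rw [h, zero_div])
  refine ⟨hne, ?_⟩
  have hlim := ((hf.comp (tendsto_add_atTop_nat s)).div hf hd).const_mul (τ ^ s)
  rw [div_self hd, mul_one] at hlim
  refine hlim.congr' (hne.mono fun n hn => ?_)
  simp only [Pi.div_apply, Function.comp_apply, pow_add]
  field_simp

/-- if `L` is strong Perron–Frobenius with dominant eigenvalue `τ`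
and `x₀` is cyclic, then for each coordinate `i` and integer `s ≥ 0`, the entry
`(Lⁿ x₀)_i` is eventually nonzero and `(L^{n+s} x₀)_i / (Lⁿ x₀)_i → τ^s`. -/
theorem ratio_limit
    (k : ℕ) (L : Matrix (Fin k) (Fin k) ℝ) (τ : ℝ)
    (hL : StrongPerronFrobenius L τ)
    (x0 : Fin k → ℝ) (hx0 : IsCyclicVec L x0)
    (i : Fin k) (s : ℕ) :
    (∀ᶠ n : ℕ in atTop, (L ^ n).mulVec x0 i ≠ 0) ∧
    Tendsto (fun n : ℕ => (L ^ (n + s)).mulVec x0 i / (L ^ n).mulVec x0 i)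
      atTop (nhds (τ ^ s)) := by
  obtain ⟨hτ, hmult, hroots, u, hu, hLu⟩ := hL
  obtain ⟨q, hχ, hqτ⟩ :=
    exists_eq_X_sub_C_mul_of_rootMultiplicity_eq_one L.charpoly_monic.ne_zero hmult
  obtain ⟨a, b, hab⟩ := (irreducible_X_sub_C τ).coprime_iff_not_dvd.mpr (mt dvd_iff_isRoot.mp hqτ)
  have hbq : (b * q).eval τ = 1 := by simpa using congrArg (eval τ) hab
  have hu0 : u ≠ 0 := fun h => (hu i).ne' (by simp [h])
  obtain ⟨c, hc0, hc⟩ := hx0.exists_aeval_mulVec_eq_smul hmult.le hu0 hLu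
    ⟨b, by rw [hχ]; ring⟩ (hbq ▸ one_ne_zero)
  have hlim := tendsto_inv_pow_smul_pow_of_charpoly_eq_X_sub_C_mul hχ hab hτ
    fun z hz => norm_lt_of_isRoot_map_of_eq_X_sub_C_mul hχ hqτ hroots hz
  have hlim_i : Tendsto (fun n => (L ^ n *ᵥ x0) i / τ ^ n) atTop (𝓝 (c * u i)) := by
    have hcont : Continuous fun M : Matrix (Fin k) (Fin k) ℝ => (M *ᵥ x0) i := by fun_prop
    simpa only [Function.comp_def, hc, smul_mulVec, Pi.smul_apply, smul_eq_mul,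
      div_eq_inv_mul] using (hcont.tendsto _).comp hlim
  exact eventually_ne_zero_and_tendsto_div_of_tendsto_div_pow hτ.ne' (mul_ne_zero hc0 (hu i).ne')
    hlim_i s
end

section
/- Let L be a k×k real matrix with the strong Perron–Frobenius property with dominant eigenvalue τ, let x_0 ∈ ℝ^k be cyclic for L, and assume every entry of L^n · x_0 is strictly positive for every n ≥ 0. Let M_n be the coding matrices generated by L and x_0, let P be a k×k real matrix with nonnegative entries whose i-th row is not identically zero, and set C_n := P · M_n. Then for any column indices j, j' ∈ {0, …, k−1}, the ratio C_n(i,j) / C_n(i,j') converges to τ^{j'−j} as n → ∞. -/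
open Matrix Polynomial Filter

/-- The coding matrices generated by `L` and `x₀`: the `j`-th column of `Mₙ` is
`L^{n+k-1-j} x₀`. -/
noncomputable def codingMatrix {k : ℕ} (L : Matrix (Fin k) (Fin k) ℝ)
    (x0 : Fin k → ℝ) (n : ℕ) : Matrix (Fin k) (Fin k) ℝ :=
  Matrix.of fun (i j : Fin k) => (L ^ (n + (k - 1 - (j : ℕ)))).mulVec x0 i

/-!
Write `L.charpoly = (X - τ) q` with `q(τ) ≠ 0`. Since `(L - τ) q(L) = 0`, the matrix
`E = q(τ)⁻¹ q(L)` is idempotent with range in the `τ`-eigenspace, and `x₀ - E x₀` is killed by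
`q(L)`. All complex roots of `q` have modulus `< τ`, so peeling them off one at a time shows
`τ⁻ⁿ Lⁿ (x₀ - E x₀) → 0`, i.e. `τ⁻ⁿ Lⁿ x₀ → E x₀`. Cyclicity of `x₀` puts the positive
eigenvector `u` on the line through `E x₀`, so `(P E x₀)ᵢ ≠ 0` because `(P u)ᵢ > 0`. Every
entry `Cₙ(i,j) = (P L^{n+k-1-j} x₀)ᵢ` is therefore `τ^{n+k-1-j}` times a sequence with the same
nonzero limit, and the ratios follow.
-/

open Topology

theorem Polynomial.mul_aeval_eq_smul {R A : Type*} [CommRing R] [Ring A] [Algebra R A]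
    {x : A} {τ : R} {q : R[X]} (h : aeval x ((X - C τ) * q) = 0) :
    x * aeval x q = τ • aeval x q := by
  rwa [map_mul, map_sub, aeval_X, aeval_C, sub_mul, sub_eq_zero, ← Algebra.smul_def] at h

theorem Polynomial.aeval_mul_self_eq_eval_smul {R A : Type*} [CommRing R] [Ring A] [Algebra R A]
    {x : A} {τ : R} {q : R[X]} (h : aeval x ((X - C τ) * q) = 0) :
    aeval x q * aeval x q = q.eval τ • aeval x q := by
  have hdiv : (X - C τ) * (q /ₘ (X - C τ)) + C (q.eval τ) = q := by
    rw [← modByMonic_X_sub_C_eq_C_eval, add_comm, modByMonic_add_div q (X - C τ)]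
  have hsq : q * q = (X - C τ) * q * (q /ₘ (X - C τ)) + C (q.eval τ) * q := by
    linear_combination (-q) * hdiv
  rw [← map_mul, hsq, map_add, map_mul, h, zero_mul, zero_add, map_mul, aeval_C,
    Algebra.smul_def]

theorem Matrix.aeval_mulVec_of_mulVec_eq_smul_s6 {ι R : Type*} [Fintype ι] [DecidableEq ι]
    [CommRing R] {L : Matrix ι ι R} {u : ι → R} {τ : R} (hu : L *ᵥ u = τ • u) (q : R[X]) :
    aeval L q *ᵥ u = q.eval τ • u := by
  induction q using Polynomial.induction_on with
  | C a => simp [Algebra.algebraMap_eq_smul_one, Matrix.smul_mulVec]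
  | add p r hp hr => simp [Matrix.add_mulVec, hp, hr, add_smul]
  | monomial n a ih =>
    rw [pow_succ, ← mul_assoc, map_mul, aeval_X, ← Matrix.mulVec_mulVec, hu, Matrix.mulVec_smul,
      ih, smul_smul]
    simp only [eval_mul, eval_X, mul_comm]

theorem Matrix.pow_mulVec_of_mulVec_eq_smul {ι R : Type*} [Fintype ι] [DecidableEq ι]
    [CommRing R] {L : Matrix ι ι R} {u : ι → R} {τ : R} (hu : L *ᵥ u = τ • u) (n : ℕ) :
    L ^ n *ᵥ u = τ ^ n • u := by
  simpa using Matrix.aeval_mulVec_of_mulVec_eq_smul_s6 hu (X ^ n)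

theorem tendsto_zero_of_le_mul_add {a e : ℕ → ℝ} {r : ℝ} (hr₀ : 0 ≤ r) (hr₁ : r < 1)
    (ha : ∀ n, 0 ≤ a n) (he : Tendsto e atTop (𝓝 0)) (hrec : ∀ n, a (n + 1) ≤ r * a n + e n) :
    Tendsto a atTop (𝓝 0) := by
  refine tendsto_order.2 ⟨fun b hb => Eventually.of_forall fun n => hb.trans_le (ha n),
    fun ε hε => ?_⟩
  have hδ : 0 < (1 - r) * (ε / 2) := mul_pos (sub_pos.2 hr₁) (half_pos hε)
  obtain ⟨N, hN⟩ := eventually_atTop.1 (he.eventually (gt_mem_nhds hδ))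
  -- beyond `N`, the excess of `a` over `ε / 2` contracts by the factor `r`
  have hcontract : ∀ m, a (N + m) - ε / 2 ≤ r ^ m * max (a N - ε / 2) 0 := by
    intro m
    induction m with
    | zero => simp
    | succ m ih =>
      have h1 := hrec (N + m)
      have h2 := hN (N + m) (by omega)
      calc a (N + (m + 1)) - ε / 2 ≤ r * (a (N + m) - ε / 2) := by
            rw [← add_assoc]; linarith
        _ ≤ r * (r ^ m * max (a N - ε / 2) 0) := by gcongr
        _ = r ^ (m + 1) * max (a N - ε / 2) 0 := by ring
  have hpow : Tendsto (fun m => r ^ m * max (a N - ε / 2) 0) atTop (𝓝 0) := by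
    simpa using (tendsto_pow_atTop_nhds_zero_of_lt_one hr₀ hr₁).mul_const (max (a N - ε / 2) 0)
  obtain ⟨M, hM⟩ := eventually_atTop.1 (hpow.eventually (gt_mem_nhds (half_pos hε)))
  refine eventually_atTop.2 ⟨N + M, fun n hn => ?_⟩
  obtain ⟨m, rfl⟩ := Nat.exists_eq_add_of_le hn
  have h1 := hcontract (M + m)
  have h2 := hM (M + m) (by omega)
  rw [← add_assoc] at h1
  linarith

theorem Module.End.tendsto_norm_pow_apply_div_pow {𝕜 E : Type*} [NormedField 𝕜]
    [SeminormedAddCommGroup E] [NormedSpace 𝕜 E] (f : Module.End 𝕜 E) {τ : ℝ} (hτ : 0 < τ)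
    {s : Multiset 𝕜} (hs : ∀ μ ∈ s, ‖μ‖ < τ) {v : E}
    (hv : aeval f (s.map fun μ => X - C μ).prod v = 0) :
    Tendsto (fun n => ‖(f ^ n) v‖ / τ ^ n) atTop (𝓝 0) := by
  induction s using Multiset.induction_on generalizing v with
  | empty =>
    simp only [Multiset.map_zero, Multiset.prod_zero, map_one, Module.End.one_apply] at hv
    simp [hv]
  | cons μ s ih =>
    set u := f v - μ • v with hu_def
    have hu : aeval f (s.map fun μ => X - C μ).prod u = 0 := by
      have h : aeval f ((s.map fun μ => X - C μ).prod * (X - C μ)) v = 0 := by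
        rwa [mul_comm, ← Multiset.prod_cons, ← Multiset.map_cons (fun μ => X - C μ)]
      simpa [u, Algebra.algebraMap_eq_smul_one] using h
    have hstep : ∀ n, (f ^ (n + 1)) v = μ • (f ^ n) v + (f ^ n) u := by
      intro n
      rw [pow_succ, Module.End.mul_apply, hu_def, map_sub, map_smul]
      abel
    have he := (ih (fun ν hν => hs ν (Multiset.mem_cons_of_mem hν)) hu).const_mul τ⁻¹
    rw [mul_zero] at he
    refine tendsto_zero_of_le_mul_add (div_nonneg (norm_nonneg μ) hτ.le)
      ((div_lt_one hτ).2 (hs μ (Multiset.mem_cons_self μ s))) (fun n => by positivity) he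
      (fun n => ?_)
    rw [hstep]
    calc ‖μ • (f ^ n) v + (f ^ n) u‖ / τ ^ (n + 1)
        ≤ (‖μ‖ * ‖(f ^ n) v‖ + ‖(f ^ n) u‖) / τ ^ (n + 1) := by
          gcongr
          exact (norm_add_le _ _).trans_eq (by rw [norm_smul])
      _ = ‖μ‖ / τ * (‖(f ^ n) v‖ / τ ^ n) + τ⁻¹ * (‖(f ^ n) u‖ / τ ^ n) := by
          field_simp
          ring

theorem Matrix.tendsto_inv_pow_smul_pow_mulVec_of_aeval_mulVec_eq_zero {ι : Type*} [Fintype ι]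
    [DecidableEq ι] {L : Matrix ι ι ℝ} {τ : ℝ} (hτ : 0 < τ) {q : ℝ[X]} (hq : q.Monic)
    (hroots : ∀ z ∈ (q.map (algebraMap ℝ ℂ)).roots, ‖z‖ < τ) {w : ι → ℝ}
    (hw : aeval L q *ᵥ w = 0) :
    Tendsto (fun n => (τ ^ n)⁻¹ • (L ^ n *ᵥ w)) atTop (𝓝 0) := by
  set φ := algebraMap ℝ ℂ
  set f : Module.End ℂ (ι → ℂ) := Matrix.toLinAlgEquiv' (L.map φ)
  have hcoord : ∀ (M : Matrix ι ι ℝ) (l : ι), (M.map φ *ᵥ (φ ∘ w)) l = φ ((M *ᵥ w) l) :=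
    fun M l => (RingHom.map_mulVec φ M w l).symm
  have hf : aeval f (q.map φ) (φ ∘ w) = 0 := by
    have hmap : aeval (L.map φ) (q.map φ) = (aeval L q).map φ :=
      (map_aeval_eq_aeval_map (ψ := φ.mapMatrix)
        (by ext x i j; simp [Matrix.algebraMap_matrix_apply]; split_ifs <;> simp) q L).symm
    ext l
    rw [aeval_algEquiv, AlgHom.comp_apply, hmap, AlgEquiv.coe_toAlgHom,
      Matrix.toLinAlgEquiv'_apply, hcoord, hw]
    simp
  rw [(IsAlgClosed.splits _).eq_prod_roots_of_monic (hq.map φ)] at hf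
  refine squeeze_zero_norm (fun n => ?_) (f.tendsto_norm_pow_apply_div_pow hτ hroots hf)
  rw [norm_smul, norm_inv, norm_pow, Real.norm_of_nonneg hτ.le, inv_mul_eq_div]
  gcongr
  refine (pi_norm_le_iff_of_nonneg (norm_nonneg _)).2 fun l => ?_
  have h := norm_le_pi_norm ((L ^ n).map φ *ᵥ (φ ∘ w)) l
  rw [hcoord, norm_algebraMap'] at h
  rwa [← map_pow, Matrix.toLinAlgEquiv'_apply, ← Matrix.map_pow]

theorem StrongPerronFrobenius.exists_charpoly_eq {k : ℕ} {L : Matrix (Fin k) (Fin k) ℝ} {τ : ℝ}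
    (hL : StrongPerronFrobenius L τ) :
    ∃ q : ℝ[X], q.Monic ∧ L.charpoly = (X - C τ) * q ∧ q.eval τ ≠ 0 ∧
      ∀ z ∈ (q.map (algebraMap ℝ ℂ)).roots, ‖z‖ < τ := by
  obtain ⟨-, hmult, hdom, -⟩ := hL
  obtain ⟨q, hpq, hndvd⟩ :=
    L.charpoly.exists_eq_pow_rootMultiplicity_mul_and_not_dvd L.charpoly_monic.ne_zero τ
  rw [hmult, pow_one] at hpq
  have hq : q.Monic := (monic_X_sub_C τ).of_mul_monic_left (hpq ▸ L.charpoly_monic)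
  have hqτ : q.eval τ ≠ 0 := fun h => hndvd (dvd_iff_isRoot.2 h)
  refine ⟨q, hq, hpq, hqτ, fun z hz => hdom z ?_ ?_⟩
  · have hroot := isRoot_of_mem_roots hz
    rw [hpq, Polynomial.map_mul, IsRoot, eval_mul, hroot, mul_zero]
  · rintro rfl
    apply hqτ
    have h := isRoot_of_mem_roots hz
    rwa [IsRoot, eval_map_algebraMap, ← Complex.coe_algebraMap,
      aeval_algebraMap_apply_eq_algebraMap_eval, map_eq_zero] at h

theorem Matrix.tendsto_inv_pow_smul_pow_mulVec_of_aeval_eq_zero {ι : Type*} [Fintype ι]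
    [DecidableEq ι] {L : Matrix ι ι ℝ} {τ : ℝ} (hτ : 0 < τ) {q : ℝ[X]} (hq : q.Monic)
    (hann : aeval L ((X - C τ) * q) = 0) (hqτ : q.eval τ ≠ 0)
    (hroots : ∀ z ∈ (q.map (algebraMap ℝ ℂ)).roots, ‖z‖ < τ) (x : ι → ℝ) :
    Tendsto (fun n => (τ ^ n)⁻¹ • (L ^ n *ᵥ x)) atTop
      (𝓝 ((q.eval τ)⁻¹ • (aeval L q *ᵥ x))) := by
  set a := (q.eval τ)⁻¹ • (aeval L q *ᵥ x)
  have ha : L *ᵥ a = τ • a := by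
    rw [Matrix.mulVec_smul, Matrix.mulVec_mulVec, mul_aeval_eq_smul hann, Matrix.smul_mulVec,
      smul_comm]
  -- `(q.eval τ)⁻¹ • aeval L q` is idempotent, so it kills the complementary part `x - a`
  have hw : aeval L q *ᵥ (x - a) = 0 := by
    rw [Matrix.mulVec_sub, Matrix.mulVec_smul, Matrix.mulVec_mulVec,
      aeval_mul_self_eq_eval_smul hann, Matrix.smul_mulVec, inv_smul_smul₀ hqτ, sub_self]
  have hsplit : ∀ n, (τ ^ n)⁻¹ • (L ^ n *ᵥ x) = a + (τ ^ n)⁻¹ • (L ^ n *ᵥ (x - a)) := by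
    intro n
    rw [Matrix.mulVec_sub, Matrix.pow_mulVec_of_mulVec_eq_smul ha, smul_sub,
      inv_smul_smul₀ (pow_ne_zero n hτ.ne'), add_sub_cancel]
  simp_rw [hsplit]
  simpa using tendsto_const_nhds.add
    (Matrix.tendsto_inv_pow_smul_pow_mulVec_of_aeval_mulVec_eq_zero hτ hq hroots hw)

theorem IsCyclicVec.mulVec_mem_span_singleton {k : ℕ} {L N : Matrix (Fin k) (Fin k) ℝ}
    {x0 : Fin k → ℝ} {τ : ℝ} (hx0 : IsCyclicVec L x0) (hNL : Commute N L)
    (hN : L *ᵥ (N *ᵥ x0) = τ • (N *ᵥ x0)) (v : Fin k → ℝ) :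
    N *ᵥ v ∈ ℝ ∙ (N *ᵥ x0) := by
  have hle : Submodule.span ℝ (Set.range fun j : Fin k => (L ^ (j : ℕ)).mulVec x0) ≤
      (ℝ ∙ (N *ᵥ x0)).comap N.mulVecLin := by
    rw [Submodule.span_le]
    rintro _ ⟨j, rfl⟩
    have hj : N *ᵥ (L ^ (j : ℕ) *ᵥ x0) = τ ^ (j : ℕ) • (N *ᵥ x0) := by
      rw [Matrix.mulVec_mulVec, (hNL.pow_right _).eq, ← Matrix.mulVec_mulVec,
        Matrix.pow_mulVec_of_mulVec_eq_smul hN]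
    simp only [SetLike.mem_coe, Submodule.mem_comap, Matrix.mulVecLin_apply, hj]
    exact Submodule.smul_mem _ _ (Submodule.mem_span_singleton_self _)
  exact hle (hx0 ▸ Submodule.mem_top)

theorem StrongPerronFrobenius.exists_tendsto_inv_pow_smul_pow_mulVec {k : ℕ}
    {L : Matrix (Fin k) (Fin k) ℝ} {τ : ℝ} (hL : StrongPerronFrobenius L τ) {x0 : Fin k → ℝ}
    (hx0 : IsCyclicVec L x0) :
    ∃ a : Fin k → ℝ, Tendsto (fun n => (τ ^ n)⁻¹ • (L ^ n *ᵥ x0)) atTop (𝓝 a) ∧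
      ∀ u : Fin k → ℝ, L *ᵥ u = τ • u → u ∈ ℝ ∙ a := by
  obtain ⟨q, hq, hpq, hqτ, hroots⟩ := hL.exists_charpoly_eq
  have hann : aeval L ((X - C τ) * q) = 0 := hpq ▸ L.aeval_self_charpoly
  refine ⟨_, Matrix.tendsto_inv_pow_smul_pow_mulVec_of_aeval_eq_zero hL.1 hq hann hqτ hroots x0,
    fun u hu => ?_⟩
  have hLN : L *ᵥ (aeval L q *ᵥ x0) = τ • (aeval L q *ᵥ x0) := by
    rw [Matrix.mulVec_mulVec, mul_aeval_eq_smul hann, Matrix.smul_mulVec]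
  have hcomm : Commute (aeval L q) L := by simpa using (Commute.all q X).map (aeval L)
  obtain ⟨d, hd⟩ := Submodule.mem_span_singleton.1 (hx0.mulVec_mem_span_singleton hcomm hLN u)
  rw [Matrix.aeval_mulVec_of_mulVec_eq_smul_s6 hu] at hd
  refine Submodule.mem_span_singleton.2 ⟨d, ?_⟩
  rw [smul_comm, hd, inv_smul_smul₀ hqτ]

theorem tendsto_div_add_of_tendsto_div_pow {g : ℕ → ℝ} {τ S : ℝ} (hτ : τ ≠ 0) (hS : S ≠ 0)
    (hg : Tendsto (fun n => g n / τ ^ n) atTop (𝓝 S)) (a b : ℕ) :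
    Tendsto (fun n => g (n + a) / g (n + b)) atTop (𝓝 (τ ^ ((a : ℤ) - b))) := by
  have hratio := ((hg.comp (tendsto_add_atTop_nat a)).div (hg.comp (tendsto_add_atTop_nat b))
    hS).mul_const (τ ^ ((a : ℤ) - b))
  rw [div_self hS, one_mul] at hratio
  refine hratio.congr fun n => ?_
  simp only [Pi.div_apply, Function.comp_apply]
  rw [zpow_sub₀ hτ, zpow_natCast, zpow_natCast, pow_add, pow_add]
  field_simp

theorem ciphertext_ratio_limit_general
    (k : ℕ) (L : Matrix (Fin k) (Fin k) ℝ) (τ : ℝ)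
    (hL : StrongPerronFrobenius L τ)
    (x0 : Fin k → ℝ) (hx0 : IsCyclicVec L x0)
    (P : Matrix (Fin k) (Fin k) ℝ) (hP : ∀ i j, 0 ≤ P i j)
    (i : Fin k) (hPi : ∃ l, P i l ≠ 0) (j j' : Fin k) :
    Tendsto
      (fun n : ℕ =>
        (P * codingMatrix L x0 n) i j / (P * codingMatrix L x0 n) i j')
      atTop (nhds (τ ^ ((j' : ℤ) - (j : ℤ)))) := by
  obtain ⟨a, ha, hspan⟩ := hL.exists_tendsto_inv_pow_smul_pow_mulVec hx0
  obtain ⟨hτ, -, -, u, hu_pos, hu⟩ := hL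
  obtain ⟨c, rfl⟩ := Submodule.mem_span_singleton.1 (hspan u hu)
  have hPu : 0 < (P *ᵥ (c • a)) i := by
    obtain ⟨l, hl⟩ := hPi
    exact Finset.sum_pos' (fun m _ => mul_nonneg (hP i m) (hu_pos m).le)
      ⟨l, Finset.mem_univ l, mul_pos ((hP i l).lt_of_ne' hl) (hu_pos l)⟩
  have hrow : Tendsto (fun n => (P *ᵥ (L ^ n *ᵥ x0)) i / τ ^ n) atTop (𝓝 ((P *ᵥ a) i)) := by
    refine (((continuous_apply i).comp P.mulVecLin.continuous_of_finiteDimensional).tendsto a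
      |>.comp ha).congr fun n => ?_
    simp [div_eq_inv_mul]
  have hPa : (P *ᵥ a) i ≠ 0 :=
    right_ne_zero_of_mul (by simpa [Matrix.mulVec_smul] using hPu.ne')
  have hratio := tendsto_div_add_of_tendsto_div_pow hτ.ne' hPa hrow (k - 1 - j) (k - 1 - j')
  have hexp : ((k - 1 - j : ℕ) : ℤ) - (k - 1 - j' : ℕ) = j' - j := by omega
  rw [hexp] at hratio
  exact hratio.congr fun n => rfl

/-- asymptotic checking relations for the ciphertext: the ratios
`Cₙ(i,j)/Cₙ(i,j')` of the ciphertext `Cₙ = P·Mₙ` converge to `τ^{j'-j}`. -/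
theorem ciphertext_ratio_limit
    (k : ℕ) (L : Matrix (Fin k) (Fin k) ℝ) (τ : ℝ)
    (hL : StrongPerronFrobenius L τ)
    (x0 : Fin k → ℝ) (hx0 : IsCyclicVec L x0)
    (hpos : ∀ n : ℕ, ∀ i : Fin k, 0 < (L ^ n).mulVec x0 i)
    (P : Matrix (Fin k) (Fin k) ℝ) (hP : ∀ i j, 0 ≤ P i j)
    (i : Fin k) (hPi : ∃ l, P i l ≠ 0) (j j' : Fin k) :
    Tendsto
      (fun n : ℕ =>
        (P * codingMatrix L x0 n) i j / (P * codingMatrix L x0 n) i j')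
      atTop (nhds (τ ^ ((j' : ℤ) - (j : ℤ)))) :=
  ciphertext_ratio_limit_general k L τ hL x0 hx0 P hP i hPi j j'
end

section
/- Let k ≥ 2, let L be a k×k real matrix with the strong Perron–Frobenius property with dominant eigenvalue τ, and let σ denote the maximum of |z| over all complex roots z ≠ τ of the characteristic polynomial of L (the second eigenmodulus). Let x_0 ∈ ℝ^k be cyclic for L and assume every entry of L^n · x_0 is strictly positive for every n ≥ 0. Then for every real σ' with σ < σ' < τ, every integer s ≥ 0, and all coordinate indices i, j, there exists a constant K > 0 such that for every n ≥ 0: |(L^{n+s}·x_0)_i/(L^n·x_0)_i − (L^{n+s}·x_0)_j/(L^n·x_0)_j| ≤ K·(σ'/τ)^n. -/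
/-!
Since `τ` is a simple root, `χ_L = (X - τ) p` with `p(τ) ≠ 0`, so `X - τ` and `p` are coprime
and `x₀ = v + w` with `L v = τ v` and `p(L) w = 0`; thus `Lⁿ x₀ = τⁿ v + Lⁿ w`. Every complex
root of `p` has modulus at most `σ < σ'`, and peeling off the linear factors of `p` one at a time
over `ℂ` gives `Lⁿ w = O(σ'ⁿ)`. Cyclicity of `x₀` puts the positive eigenvector on the line
through `v`, and positivity of `Lⁿ x₀` then forces `v > 0`. Hence every coordinate ratio
`(Lⁿ⁺ˢ x₀)ᵢ / (Lⁿ x₀)ᵢ` is `τˢ + O((σ'/τ)ⁿ)`.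
-/

open Matrix Polynomial Filter

open Asymptotics

namespace Polynomial

theorem Monic.exists_eq_X_sub_C_mul_of_rootMultiplicity_eq_one {R : Type*} [CommRing R]
    [Nontrivial R] {f : R[X]} (hf : f.Monic) {a : R} (h : f.rootMultiplicity a = 1) :
    ∃ p : R[X], p.Monic ∧ f = (X - C a) * p ∧ p.eval a ≠ 0 := by
  have hfac := pow_mul_divByMonic_rootMultiplicity_eq f a
  have heval := eval_divByMonic_pow_rootMultiplicity_ne_zero a hf.ne_zero
  rw [h, pow_one] at hfac heval
  exact ⟨_, (monic_X_sub_C a).of_mul_monic_left (hfac.symm ▸ hf), hfac.symm, heval⟩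

theorem isCoprime_X_sub_C_of_eval_ne_zero {K : Type*} [Field K] {p : K[X]} {a : K}
    (h : p.eval a ≠ 0) : IsCoprime (X - C a) p :=
  (EuclideanDomain.dvd_or_coprime _ _ (irreducible_X_sub_C a)).resolve_left
    (mt dvd_iff_isRoot.mp h)

end Polynomial

namespace Matrix

variable {n : Type*} [Fintype n] [DecidableEq n]

theorem aeval_mulVec_of_mulVec_eq_smul_s9 {R : Type*} [CommRing R] {L : Matrix n n R} {τ : R}
    {v : n → R} (hv : L *ᵥ v = τ • v) (q : R[X]) : aeval L q *ᵥ v = q.eval τ • v := by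
  induction q using Polynomial.induction_on with
  | C a => rw [aeval_C, Algebra.algebraMap_eq_smul_one, smul_mulVec, one_mulVec, eval_C]
  | add p q hp hq => rw [map_add, add_mulVec, hp, hq, eval_add, add_smul]
  | monomial m a ih =>
    rw [pow_succ, ← mul_assoc, map_mul, aeval_X, ← mulVec_mulVec, hv, mulVec_smul, ih, smul_smul,
      eval_mul_X, mul_comm]

theorem pow_mulVec_of_mulVec_eq_smul_s9 {R : Type*} [CommRing R] {L : Matrix n n R} {τ : R}
    {v : n → R} (hv : L *ᵥ v = τ • v) (m : ℕ) : L ^ m *ᵥ v = τ ^ m • v := by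
  simpa using aeval_mulVec_of_mulVec_eq_smul_s9 hv (X ^ m)

theorem exists_eq_add_of_charpoly_eq_X_sub_C_mul {K : Type*} [Field K] {L : Matrix n n K} {τ : K}
    {p : K[X]} (hL : L.charpoly = (X - C τ) * p) (hp : p.eval τ ≠ 0) (x : n → K) :
    ∃ v w, x = v + w ∧ L *ᵥ v = τ • v ∧ aeval L p *ᵥ w = 0 := by
  have hx : x ∈ LinearMap.ker (aeval (toLin' L) (X - C τ)) ⊔
      LinearMap.ker (aeval (toLin' L) p) := by
    rw [sup_ker_aeval_eq_ker_aeval_mul_of_coprime _ (isCoprime_X_sub_C_of_eval_ne_zero hp), ← hL,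
      ← charpoly_toLin', LinearMap.aeval_self_charpoly]
    trivial
  obtain ⟨v, hv, w, hw, rfl⟩ := Submodule.mem_sup.mp hx
  refine ⟨v, w, rfl, by simpa [sub_eq_zero] using hv, ?_⟩
  rw [LinearMap.mem_ker, show toLin' L = toLinAlgEquiv' L from rfl, aeval_algHom_apply] at hw
  simpa using hw

end Matrix

/-- `p(L)` kills `w`, so it maps every `Lᵐ (v + w)`, hence everything, into `ℝ v`, while it acts
on a `τ`-eigenvector as the nonzero scalar `p(τ)`. -/
theorem IsCyclicVec.exists_eq_smul {k : ℕ} {L : Matrix (Fin k) (Fin k) ℝ} {τ : ℝ} {p : ℝ[X]}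
    {u v w : Fin k → ℝ} (hx0 : IsCyclicVec L (v + w)) (hv : L *ᵥ v = τ • v)
    (hw : aeval L p *ᵥ w = 0) (hp : p.eval τ ≠ 0) (hu : L *ᵥ u = τ • u) :
    ∃ c : ℝ, u = c • v := by
  have hrange : ⊤ ≤ (Submodule.span ℝ {v}).comap (aeval L p).mulVecLin := by
    rw [← hx0, Submodule.span_le]
    rintro _ ⟨m, rfl⟩
    have hcomm : aeval L p * L ^ (m : ℕ) = L ^ (m : ℕ) * aeval L p := by
      rw [← aeval_X_pow (R := ℝ), ← map_mul, ← map_mul, mul_comm]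
    rw [SetLike.mem_coe, Submodule.mem_comap, mulVecLin_apply, mulVec_mulVec, hcomm,
      ← mulVec_mulVec, mulVec_add, hw, add_zero, aeval_mulVec_of_mulVec_eq_smul_s9 hv, mulVec_smul,
      pow_mulVec_of_mulVec_eq_smul_s9 hv, smul_smul]
    exact Submodule.smul_mem _ _ (Submodule.mem_span_singleton_self v)
  have hpu : p.eval τ • u ∈ Submodule.span ℝ {v} := by
    simpa [aeval_mulVec_of_mulVec_eq_smul_s9 hu] using hrange (Submodule.mem_top (R := ℝ) (x := u))
  obtain ⟨c, hc⟩ := Submodule.mem_span_singleton.mp ((Submodule.smul_mem_iff _ hp).mp hpu)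
  exact ⟨c, hc.symm⟩

theorem norm_le_of_norm_sub_smul_le {𝕜 E : Type*} [NormedField 𝕜] [NormedAddCommGroup E]
    [NormedSpace 𝕜 E] {z : 𝕜} {ρ C : ℝ} (hz : ‖z‖ < ρ) {u : ℕ → E}
    (hu : ∀ n, ‖u (n + 1) - z • u n‖ ≤ C * ρ ^ n) (n : ℕ) :
    ‖u n‖ ≤ (‖u 0‖ + C / (ρ - ‖z‖)) * ρ ^ n := by
  have hρz : 0 < ρ - ‖z‖ := sub_pos.mpr hz
  have hC : 0 ≤ C := by simpa using (norm_nonneg _).trans (hu 0)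
  set D := ‖u 0‖ + C / (ρ - ‖z‖)
  have hCD : C ≤ D * (ρ - ‖z‖) := by
    rw [add_mul, div_mul_cancel₀ _ hρz.ne']
    exact le_add_of_nonneg_left (mul_nonneg (norm_nonneg _) hρz.le)
  induction n with
  | zero => simpa [D] using div_nonneg hC hρz.le
  | succ n ih =>
    have hρn : 0 ≤ ρ ^ n := pow_nonneg ((norm_nonneg z).trans hz.le) n
    calc ‖u (n + 1)‖ ≤ ‖u (n + 1) - z • u n‖ + ‖z • u n‖ := norm_le_norm_sub_add _ _
      _ ≤ C * ρ ^ n + ‖z‖ * (D * ρ ^ n) := by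
        rw [norm_smul]; gcongr; exact hu n
      _ ≤ D * (ρ - ‖z‖) * ρ ^ n + ‖z‖ * (D * ρ ^ n) := by gcongr
      _ = D * ρ ^ (n + 1) := by ring

namespace Module.End

variable {E : Type*} [NormedAddCommGroup E] [NormedSpace ℂ E] (f : Module.End ℂ E) {ρ : ℝ}

theorem exists_norm_pow_apply_le_of_aeval_prod_eq_zero (s : Multiset ℂ) (hs : ∀ z ∈ s, ‖z‖ < ρ)
    {x : E} (hx : aeval f (s.map fun z => X - C z).prod x = 0) :
    ∃ K, 0 ≤ K ∧ ∀ n, ‖(f ^ n) x‖ ≤ K * ρ ^ n := by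
  induction s using Multiset.induction_on generalizing x with
  | empty => exact ⟨0, le_rfl, fun n => by simp_all⟩
  | cons z s ih =>
    have hz := hs z (Multiset.mem_cons_self z s)
    obtain ⟨K, hK, hbound⟩ := ih (fun y hy => hs y (Multiset.mem_cons_of_mem hy))
      (x := (f - z • 1) x) (by
        rw [Multiset.map_cons, Multiset.prod_cons, mul_comm, map_mul] at hx
        simpa [Algebra.algebraMap_eq_smul_one] using hx)
    have hstep : ∀ n, ‖(f ^ (n + 1)) x - z • (f ^ n) x‖ ≤ K * ρ ^ n := fun n => by
      simpa [pow_succ, ← Module.End.mul_apply, mul_sub, ← mul_assoc] using hbound n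
    refine ⟨‖x‖ + K / (ρ - ‖z‖), by have := sub_pos.mpr hz; positivity, fun n => ?_⟩
    simpa using norm_le_of_norm_sub_smul_le hz (u := fun n => (f ^ n) x) hstep n

theorem exists_norm_pow_apply_le_of_aeval_eq_zero {q : ℂ[X]} (hq : q ≠ 0)
    (hroots : ∀ z, q.IsRoot z → ‖z‖ < ρ) {x : E} (hx : aeval f q x = 0) :
    ∃ K, 0 ≤ K ∧ ∀ n, ‖(f ^ n) x‖ ≤ K * ρ ^ n := by
  rw [← C_leadingCoeff_mul_prod_multiset_X_sub_C (IsAlgClosed.card_roots_eq_natDegree (p := q)),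
    map_mul, aeval_C, Module.End.mul_apply, Module.algebraMap_end_apply,
    smul_eq_zero_iff_right (leadingCoeff_ne_zero.mpr hq)] at hx
  exact exists_norm_pow_apply_le_of_aeval_prod_eq_zero f _
    (fun z hz => hroots z (isRoot_of_mem_roots hz)) hx

end Module.End

namespace Matrix

variable {n : Type*} [Fintype n] [DecidableEq n]

theorem toLin'_map_ofReal_apply (M : Matrix n n ℝ) (w : n → ℝ) :
    toLin' (M.map (algebraMap ℝ ℂ)) (algebraMap ℝ ℂ ∘ w) = algebraMap ℝ ℂ ∘ (M *ᵥ w) := by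
  ext i
  exact (RingHom.map_mulVec _ M w i).symm

theorem aeval_map_ofReal (L : Matrix n n ℝ) (p : ℝ[X]) :
    aeval (L.map (algebraMap ℝ ℂ)) (p.map (algebraMap ℝ ℂ)) =
      (aeval L p).map (algebraMap ℝ ℂ) := by
  rw [aeval_map_algebraMap]
  exact aeval_algHom_apply (AlgHom.mapMatrix (Algebra.ofId ℝ ℂ)) L p

theorem isBigO_pow_mulVec_apply_of_aeval_mulVec_eq_zero {L : Matrix n n ℝ} {p : ℝ[X]}
    (hp : p ≠ 0) {ρ : ℝ} (hroots : ∀ z : ℂ, (p.map (algebraMap ℝ ℂ)).IsRoot z → ‖z‖ < ρ)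
    {w : n → ℝ} (hw : aeval L p *ᵥ w = 0) (i : n) :
    (fun m => (L ^ m *ᵥ w) i) =O[atTop] (ρ ^ ·) := by
  set f := toLin' (L.map (algebraMap ℝ ℂ))
  have hpow : ∀ m, (f ^ m) (algebraMap ℝ ℂ ∘ w) = algebraMap ℝ ℂ ∘ (L ^ m *ᵥ w) := fun m => by
    rw [← toLin'_pow, ← Matrix.map_pow, toLin'_map_ofReal_apply]
  have hker : aeval f (p.map (algebraMap ℝ ℂ)) (algebraMap ℝ ℂ ∘ w) = 0 := by
    rw [show f = toLinAlgEquiv' _ from rfl, aeval_algHom_apply, aeval_map_ofReal]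
    simpa [hw] using toLin'_map_ofReal_apply (aeval L p) w
  obtain ⟨K, hK, hbound⟩ :=
    Module.End.exists_norm_pow_apply_le_of_aeval_eq_zero f (map_ne_zero hp) hroots hker
  refine IsBigO.of_bound K (Eventually.of_forall fun m => ?_)
  calc ‖(L ^ m *ᵥ w) i‖ = ‖(f ^ m) (algebraMap ℝ ℂ ∘ w) i‖ := by
        rw [hpow, Function.comp_apply, Complex.coe_algebraMap, Complex.norm_real]
    _ ≤ ‖(f ^ m) (algebraMap ℝ ℂ ∘ w)‖ := norm_le_pi_norm _ i
    _ ≤ K * ‖ρ ^ m‖ := (hbound m).trans (by gcongr; exact Real.le_norm_self _)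

end Matrix

section DominantGrowth

variable {τ ρ g : ℝ} {e x : ℕ → ℝ}

theorem nonneg_of_forall_pos_pow_mul_add (hτ : 0 < τ) (he : e =o[atTop] (τ ^ ·))
    (hx : ∀ n, 0 < τ ^ n * g + e n) : 0 ≤ g := by
  have hlim : Tendsto (fun n => (τ ^ n * g + e n) / τ ^ n) atTop (nhds g) := by
    have := he.tendsto_div_nhds_zero.const_add g
    rw [add_zero] at this
    refine this.congr fun n => ?_
    field_simp
  exact ge_of_tendsto' hlim fun n => (div_pos (hx n) (pow_pos hτ n)).le

theorem eventually_half_mul_pow_le (hg : 0 < g) (hρ : 0 ≤ ρ) (hρτ : ρ < τ)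
    (he : e =O[atTop] (ρ ^ ·)) (hx : ∀ n, x n = τ ^ n * g + e n) :
    ∀ᶠ n in atTop, g / 2 * τ ^ n ≤ x n := by
  have hτ : 0 < τ := hρ.trans_lt hρτ
  filter_upwards [(he.trans_isLittleO (isLittleO_pow_pow_of_lt_left hρ hρτ)).bound
    (half_pos hg)] with n hn
  rw [Real.norm_eq_abs, Real.norm_of_nonneg (pow_nonneg hτ.le n)] at hn
  rw [hx n]
  linarith [neg_abs_le (e n)]

theorem isBigO_div_sub_pow (hg : 0 < g) (hρ : 0 ≤ ρ) (hρτ : ρ < τ)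
    (he : e =O[atTop] (ρ ^ ·)) (hx : ∀ n, x n = τ ^ n * g + e n) (s : ℕ) :
    (fun n => x (n + s) / x n - τ ^ s) =O[atTop] ((ρ / τ) ^ ·) := by
  have hτ : 0 < τ := hρ.trans_lt hρτ
  have hlow := eventually_half_mul_pow_le hg hρ hρτ he hx
  have hnum : (fun n => x (n + s) - τ ^ s * x n) =O[atTop] (ρ ^ ·) := by
    have hshift : (fun n => e (n + s)) =O[atTop] (ρ ^ ·) :=
      (he.comp_tendsto (tendsto_add_atTop_nat s)).trans
        ((isBigO_const_mul_self (ρ ^ s) (ρ ^ ·) atTop).congr_left fun n => by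
          rw [Function.comp_apply, pow_add, mul_comm])
    refine (hshift.sub (he.const_mul_left (τ ^ s))).congr (fun n => ?_) (fun _ => rfl)
    rw [hx, hx, pow_add]; ring
  have hden : (fun n => (x n)⁻¹) =O[atTop] (fun n => (τ ^ n)⁻¹) := by
    refine IsBigO.of_bound (2 / g) ?_
    filter_upwards [hlow] with n hn
    have hpos : 0 < g / 2 * τ ^ n := by positivity
    rw [norm_inv, norm_inv, Real.norm_of_nonneg (hpos.trans_le hn).le,
      Real.norm_of_nonneg (pow_nonneg hτ.le n)]
    calc (x n)⁻¹ ≤ (g / 2 * τ ^ n)⁻¹ := inv_anti₀ hpos hn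
      _ = 2 / g * (τ ^ n)⁻¹ := by field_simp
  refine (hnum.mul hden).congr' ?_ (Eventually.of_forall fun n => (div_pow ρ τ n).symm)
  filter_upwards [hlow] with n hn
  have : x n ≠ 0 := ((by positivity : 0 < g / 2 * τ ^ n).trans_le hn).ne'
  field_simp

theorem exists_pos_bound_of_isBigO_pow {f : ℕ → ℝ} {r : ℝ} (hr : 0 < r)
    (hf : f =O[atTop] (r ^ ·)) : ∃ K, 0 < K ∧ ∀ n, |f n| ≤ K * r ^ n := by
  obtain ⟨K, hK⟩ := (isBigO_nat_atTop_iff fun n h => absurd h (by positivity)).mp hf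
  refine ⟨max K 1, by positivity, fun n => (hK n).trans ?_⟩
  rw [Real.norm_of_nonneg (by positivity)]
  gcongr
  exact le_max_left K 1

end DominantGrowth

theorem ratio_difference_decay_general
    (k : ℕ) (L : Matrix (Fin k) (Fin k) ℝ) (τ σ : ℝ)
    (hL : StrongPerronFrobenius L τ)
    (hσ : IsGreatest {x : ℝ | ∃ z : ℂ,
      (L.charpoly.map (algebraMap ℝ ℂ)).IsRoot z ∧ z ≠ (τ : ℂ) ∧
      ‖z‖ = x} σ)
    (x0 : Fin k → ℝ) (hx0 : IsCyclicVec L x0)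
    (hpos : ∀ n : ℕ, ∀ i : Fin k, 0 < (L ^ n).mulVec x0 i)
    (σ' : ℝ) (hσ'1 : σ < σ') (hσ'2 : σ' < τ)
    (s : ℕ) (i j : Fin k) :
    ∃ K : ℝ, 0 < K ∧ ∀ n : ℕ,
      |(L ^ (n + s)).mulVec x0 i / (L ^ n).mulVec x0 i -
        (L ^ (n + s)).mulVec x0 j / (L ^ n).mulVec x0 j| ≤ K * (σ' / τ) ^ n := by
  obtain ⟨hτ, hmult, -, u, hu, huL⟩ := hL
  obtain ⟨p, hpm, hfac, hpτ⟩ :=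
    (charpoly_monic L).exists_eq_X_sub_C_mul_of_rootMultiplicity_eq_one hmult
  obtain ⟨v, w, rfl, hv, hw⟩ := exists_eq_add_of_charpoly_eq_X_sub_C_mul hfac hpτ x0
  have hσ'0 : 0 < σ' := by
    obtain ⟨z, -, -, rfl⟩ := hσ.1
    exact (norm_nonneg z).trans_lt hσ'1
  have hroots (z : ℂ) (hz : (p.map (algebraMap ℝ ℂ)).IsRoot z) : ‖z‖ < σ' := by
    refine (hσ.2 ⟨z, by simp [hfac, hz.eq_zero], fun hzτ => hpτ ?_, rfl⟩).trans_lt hσ'1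
    exact (isRoot_map_iff (algebraMap ℝ ℂ).injective).mp (by rwa [hzτ] at hz)
  have he (i : Fin k) : (fun n => (L ^ n *ᵥ w) i) =O[atTop] (σ' ^ ·) :=
    isBigO_pow_mulVec_apply_of_aeval_mulVec_eq_zero hpm.ne_zero hroots hw i
  have hx (i : Fin k) (n : ℕ) : (L ^ n *ᵥ (v + w)) i = τ ^ n * v i + (L ^ n *ᵥ w) i := by
    simp [mulVec_add, pow_mulVec_of_mulVec_eq_smul_s9 hv]
  obtain ⟨c, rfl⟩ := hx0.exists_eq_smul hv hw hpτ huL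
  have hvpos (i : Fin k) : 0 < v i := by
    refine (nonneg_of_forall_pos_pow_mul_add hτ ((he i).trans_isLittleO
      (isLittleO_pow_pow_of_lt_left hσ'0.le hσ'2)) fun n => hx i n ▸ hpos n i).lt_of_ne' ?_
    exact fun h => (hu i).ne' (by simp [h])
  have hratio (i : Fin k) := isBigO_div_sub_pow (hvpos i) hσ'0.le hσ'2 (he i) (hx i) s
  simpa only [sub_sub_sub_cancel_right] using
    exists_pos_bound_of_isBigO_pow (div_pos hσ'0 hτ) ((hratio i).sub (hratio j))

/-- the differences of coordinate ratios of `Lⁿ x₀` decay like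
`(σ'/τ)ⁿ` for any `σ'` strictly between the second eigenmodulus `σ` and `τ`. -/
theorem ratio_difference_decay
    (k : ℕ) (hk : 2 ≤ k) (L : Matrix (Fin k) (Fin k) ℝ) (τ σ : ℝ)
    (hL : StrongPerronFrobenius L τ)
    (hσ : IsGreatest {x : ℝ | ∃ z : ℂ,
      (L.charpoly.map (algebraMap ℝ ℂ)).IsRoot z ∧ z ≠ (τ : ℂ) ∧
      ‖z‖ = x} σ)
    (x0 : Fin k → ℝ) (hx0 : IsCyclicVec L x0)
    (hpos : ∀ n : ℕ, ∀ i : Fin k, 0 < (L ^ n).mulVec x0 i)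
    (σ' : ℝ) (hσ'1 : σ < σ') (hσ'2 : σ' < τ)
    (s : ℕ) (i j : Fin k) :
    ∃ K : ℝ, 0 < K ∧ ∀ n : ℕ,
      |(L ^ (n + s)).mulVec x0 i / (L ^ n).mulVec x0 i -
        (L ^ (n + s)).mulVec x0 j / (L ^ n).mulVec x0 j| ≤ K * (σ' / τ) ^ n :=
  ratio_difference_decay_general k L τ σ hL hσ x0 hx0 hpos σ' hσ'1 hσ'2 s i j
end

section
/- Let L be a k×k real matrix with the strong Perron–Frobenius property with dominant eigenvalue τ, let x_0 ∈ ℝ^k be cyclic for L, and assume every entry of L^n · x_0 is strictly positive for every n ≥ 0. Let M_n be the coding matrices generated by L and x_0. Then for any column indices j, j' ∈ {0, …, k−1}, both the minimum over l = 0,…,k−1 of M_n(l,j)/M_n(l,j') and the maximum over l = 0,…,k−1 of M_n(l,j)/M_n(l,j') converge to τ^{j'−j} as n → ∞; i.e. both bounds in the checking relations converge to τ^{j'−j}. -/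
open Matrix Polynomial Filter

/-!
Write the characteristic polynomial of `L` as `(X - τ) q` with `q(τ) ≠ 0`. Then `P = q(L) / q(τ)`
is an idempotent with `L P = P L = τ P`, and `B = L - τ P` satisfies `P B = B P = 0`, so
`(L / τ)^(n+1) = P + (B / τ)^(n+1)`. A nonzero eigenvalue of `B` is an eigenvalue of `L` other
than `τ`, so by Gelfand's formula `(B / τ)^n → 0` and `(L / τ)^n` converges to some `Q`.
The vector `y = Q x₀` is a `τ`-eigenvector of `L`. It is nonzero because `x₀` is cyclic while `Q`
fixes the positive eigenvector `u`, it is nonnegative as a limit of positive vectors, and it is a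
multiple of `u` because `τ` is a simple root; hence `y > 0`. So `(L^n x₀)_l ~ τ^n y_l`, and the
ratio `M_n(l,j) / M_n(l,j') = (L^(n+k-1-j) x₀)_l / (L^(n+k-1-j') x₀)_l` tends to `τ^(j'-j)` for
every `l`, hence so do its minimum and maximum over `l`.
-/

open Topology
open scoped NNReal

theorem tendsto_pow_nhds_zero_of_forall_norm_spectrum_lt_one {A : Type*} [NormedRing A]
    [NormedAlgebra ℂ A] [CompleteSpace A] (a : A) (h : ∀ z ∈ spectrum ℂ a, ‖z‖ < 1) :
    Tendsto (a ^ ·) atTop (𝓝 0) := by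
  rcases subsingleton_or_nontrivial A with _ | _
  · simpa only [Subsingleton.elim _ (0 : A)] using tendsto_const_nhds
  obtain ⟨r, hρr, hr1⟩ : ∃ r : ℝ≥0, spectralRadius ℂ a < r ∧ r < 1 := by
    obtain ⟨r, h1, h2⟩ := ENNReal.lt_iff_exists_nnreal_btwn.mp
      (spectrum.spectralRadius_lt_of_forall_lt a (r := 1) fun z hz => by exact_mod_cast h z hz)
    exact ⟨r, h1, by exact_mod_cast h2⟩
  have hbound : ∀ᶠ n : ℕ in atTop, ‖a ^ n‖ ≤ (r : ℝ) ^ n := by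
    have hgelfand := spectrum.pow_nnnorm_pow_one_div_tendsto_nhds_spectralRadius a
    filter_upwards [hgelfand.eventually_lt_const hρr, eventually_ne_atTop 0] with n hn hn0
    rw [one_div, ENNReal.rpow_inv_lt_iff (by positivity), ENNReal.rpow_natCast,
      ← ENNReal.coe_pow, ENNReal.coe_lt_coe] at hn
    exact_mod_cast hn.le
  exact squeeze_zero_norm' hbound (tendsto_pow_atTop_nhds_zero_of_lt_one r.2 hr1)

theorem add_pow_succ_of_idempotent {R : Type*} [Ring R] {P B : R} (hP : P * P = P)
    (hPB : P * B = 0) (hBP : B * P = 0) (n : ℕ) : (P + B) ^ (n + 1) = P + B ^ (n + 1) := by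
  induction n with
  | zero => simp
  | succ n ih =>
    have hBnP : B ^ (n + 1) * P = 0 := by rw [pow_succ, mul_assoc, hBP, mul_zero]
    rw [pow_succ, ih, add_mul, mul_add, mul_add, hP, hPB, hBnP, ← pow_succ, add_zero, zero_add]

section RootProjection

variable {K A : Type*} [Field K] [Ring A] [Algebra K A]

theorem Polynomial.aeval_mul_of_mul_eq_smul {a y : A} {τ : K} (h : a * y = τ • y) (p : K[X]) :
    aeval a p * y = p.eval τ • y := by
  have := Module.End.aeval_apply_of_mem_apply_eq_smul (f := Algebra.lmul K A a) (p := p) h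
  rwa [Polynomial.aeval_algHom_apply] at this

/-- When `(X - τ) q` annihilates `a` and `q(τ) ≠ 0`, the spectral projection of `a` onto its
`τ`-eigenspace. -/
noncomputable def rootProjection (a : A) (τ : K) (q : K[X]) : A :=
  (q.eval τ)⁻¹ • aeval a q

variable {a : A} {τ : K} {q : K[X]}

theorem mul_rootProjection (hq : aeval a ((X - C τ) * q) = 0) :
    a * rootProjection a τ q = τ • rootProjection a τ q := by
  have h : (a - algebraMap K A τ) * aeval a q = 0 := by simpa using hq
  rw [sub_mul, sub_eq_zero, Algebra.algebraMap_eq_smul_one, smul_one_mul] at h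
  rw [rootProjection, mul_smul_comm, h, smul_comm]

theorem rootProjection_mul (hq : aeval a ((X - C τ) * q) = 0) :
    rootProjection a τ q * a = τ • rootProjection a τ q := by
  have hcomm : aeval a q * a = a * aeval a q := by
    simpa using ((Commute.all q X).map (aeval a)).eq
  rw [← mul_rootProjection hq, rootProjection, smul_mul_assoc, mul_smul_comm, hcomm]

theorem rootProjection_mul_self (hq : aeval a ((X - C τ) * q) = 0) (hqτ : q.eval τ ≠ 0) :
    rootProjection a τ q * rootProjection a τ q = rootProjection a τ q :=
  calc rootProjection a τ q * rootProjection a τ q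
      = (q.eval τ)⁻¹ • (aeval a q * rootProjection a τ q) := smul_mul_assoc _ _ _
    _ = rootProjection a τ q := by
      rw [aeval_mul_of_mul_eq_smul (mul_rootProjection hq), smul_smul, inv_mul_cancel₀ hqτ,
        one_smul]

theorem rootProjection_mul_sub (hq : aeval a ((X - C τ) * q) = 0) (hqτ : q.eval τ ≠ 0) :
    rootProjection a τ q * (a - τ • rootProjection a τ q) = 0 := by
  rw [mul_sub, rootProjection_mul hq, mul_smul_comm, rootProjection_mul_self hq hqτ, sub_self]

theorem sub_mul_rootProjection (hq : aeval a ((X - C τ) * q) = 0) (hqτ : q.eval τ ≠ 0) :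
    (a - τ • rootProjection a τ q) * rootProjection a τ q = 0 := by
  rw [sub_mul, mul_rootProjection hq, smul_mul_assoc, rootProjection_mul_self hq hqτ, sub_self]

theorem inv_smul_pow_succ_eq_rootProjection_add (hq : aeval a ((X - C τ) * q) = 0)
    (hqτ : q.eval τ ≠ 0) (hτ : τ ≠ 0) (n : ℕ) :
    (τ⁻¹ • a) ^ (n + 1) =
      rootProjection a τ q + (τ⁻¹ • (a - τ • rootProjection a τ q)) ^ (n + 1) := by
  have hsplit : τ⁻¹ • a = rootProjection a τ q + τ⁻¹ • (a - τ • rootProjection a τ q) := by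
    rw [smul_sub, smul_smul, inv_mul_cancel₀ hτ, one_smul, add_sub_cancel]
  rw [hsplit]
  apply add_pow_succ_of_idempotent (rootProjection_mul_self hq hqτ)
  · rw [mul_smul_comm, rootProjection_mul_sub hq hqτ, smul_zero]
  · rw [smul_mul_assoc, sub_mul_rootProjection hq hqτ, smul_zero]

end RootProjection

section MatrixEigen

variable {K : Type*} [Field K] {n : Type*} [Fintype n] [DecidableEq n]

theorem Matrix.aeval_mulVec_of_mulVec_eq_smul_s18 {M : Matrix n n K} {v : n → K} {τ : K}
    (h : M *ᵥ v = τ • v) (p : K[X]) : aeval M p *ᵥ v = p.eval τ • v := by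
  have := Module.End.aeval_apply_of_mem_apply_eq_smul (f := toLin' M) (p := p)
    (by rwa [toLin'_apply])
  rwa [← Matrix.toLinAlgEquiv'_apply, ← Polynomial.aeval_algHom_apply]

theorem Matrix.isRoot_charpoly_of_mulVec_eq_smul {M : Matrix n n K} {v : n → K} {z : K}
    (hv : v ≠ 0) (h : M *ᵥ v = z • v) : M.charpoly.IsRoot z := by
  rw [← Matrix.charpoly_toLin', ← Module.End.hasEigenvalue_iff_isRoot_charpoly]
  exact Module.End.hasEigenvalue_of_hasEigenvector
    ⟨Module.End.mem_eigenspace_iff.mpr (by rwa [toLin'_apply]), hv⟩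

theorem Matrix.exists_mulVec_eq_smul_of_mem_spectrum {M : Matrix n n K} {z : K}
    (hz : z ∈ spectrum K M) : ∃ v ≠ 0, M *ᵥ v = z • v := by
  rw [← Matrix.spectrum_toLin', ← Module.End.hasEigenvalue_iff_mem_spectrum] at hz
  obtain ⟨v, hv, hv0⟩ := hz.exists_hasEigenvector
  exact ⟨v, hv0, by rwa [Module.End.mem_eigenspace_iff, toLin'_apply] at hv⟩

theorem Matrix.exists_eq_smul_of_rootMultiplicity_le_one_s18 {M : Matrix n n K} {τ : K}
    (hmult : M.charpoly.rootMultiplicity τ ≤ 1) {u w : n → K} (hu0 : u ≠ 0)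
    (hu : M *ᵥ u = τ • u) (hw : M *ᵥ w = τ • w) : ∃ c : K, w = c • u := by
  set E := Module.End.eigenspace (toLin' M) τ
  have hmem : ∀ v, M *ᵥ v = τ • v → v ∈ E := fun v hv =>
    Module.End.mem_eigenspace_iff.mpr (by rwa [toLin'_apply])
  have hle : Module.finrank K E ≤ 1 :=
    (LinearMap.finrank_eigenspace_le _ _).trans (by rwa [charpoly_toLin'])
  have hne : Module.finrank K E ≠ 0 := by
    rw [Ne, Submodule.finrank_eq_zero]
    exact (Submodule.ne_bot_iff _).mpr ⟨u, hmem u hu, hu0⟩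
  have hE := eq_span_singleton_of_mem_of_finrank_eq_one (by omega) (hmem u hu) hu0
  obtain ⟨c, hc⟩ := Submodule.mem_span_singleton.mp (hE ▸ hmem w hw)
  exact ⟨c, hc.symm⟩

theorem Matrix.isRoot_charpoly_of_sub_rootProjection {M : Matrix n n K} {τ z : K} {q : K[X]}
    (hq : aeval M ((X - C τ) * q) = 0) (hqτ : q.eval τ ≠ 0) {v : n → K} (hv : v ≠ 0)
    (hz : z ≠ 0) (h : (M - τ • rootProjection M τ q) *ᵥ v = z • v) :
    M.charpoly.IsRoot z ∧ z ≠ τ := by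
  have hPv : rootProjection M τ q *ᵥ v = 0 := by
    have : z • rootProjection M τ q *ᵥ v = 0 := by
      rw [← mulVec_smul, ← h, mulVec_mulVec, rootProjection_mul_sub hq hqτ, zero_mulVec]
    exact (smul_eq_zero.mp this).resolve_left hz
  have hMv : M *ᵥ v = z • v := by
    rwa [sub_mulVec, smul_mulVec, hPv, smul_zero, sub_zero] at h
  refine ⟨isRoot_charpoly_of_mulVec_eq_smul hv hMv, ?_⟩
  rintro rfl
  rw [rootProjection, smul_mulVec, aeval_mulVec_of_mulVec_eq_smul_s18 hMv, smul_smul,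
    inv_mul_cancel₀ hqτ, one_smul] at hPv
  exact hv hPv

end MatrixEigen

section PowersConverge

-- Gelfand's formula needs some Banach algebra norm on matrices; any one will do.
attribute [local instance] Matrix.linftyOpNormedRing Matrix.linftyOpNormedAlgebra

theorem Matrix.exists_tendsto_inv_smul_pow_of_simple_dominant_root {n : Type*} [Fintype n]
    [DecidableEq n] {M : Matrix n n ℂ} {τ : ℂ} (hτ : τ ≠ 0)
    (hmult : M.charpoly.rootMultiplicity τ = 1)
    (hroots : ∀ z, M.charpoly.IsRoot z → z ≠ τ → ‖z‖ < ‖τ‖) :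
    ∃ Q, Tendsto (fun m : ℕ => (τ⁻¹ • M) ^ m) atTop (𝓝 Q) := by
  obtain ⟨q, hfac, hndvd⟩ :=
    exists_eq_pow_rootMultiplicity_mul_and_not_dvd M.charpoly (charpoly_monic M).ne_zero τ
  rw [hmult, pow_one] at hfac
  have hq : aeval M ((X - C τ) * q) = 0 := hfac ▸ aeval_self_charpoly M
  have hqτ : q.eval τ ≠ 0 := fun h => hndvd (dvd_iff_isRoot.mpr h)
  set B := τ⁻¹ • (M - τ • rootProjection M τ q)
  have hB : ∀ z ∈ spectrum ℂ B, ‖z‖ < 1 := by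
    intro z hz
    obtain ⟨v, hv, hBv⟩ := exists_mulVec_eq_smul_of_mem_spectrum hz
    rcases eq_or_ne z 0 with rfl | hz0
    · simp
    have h : (M - τ • rootProjection M τ q) *ᵥ v = (τ * z) • v := by
      rw [mul_smul, ← hBv, smul_mulVec, smul_smul, mul_inv_cancel₀ hτ, one_smul]
    obtain ⟨hroot, hne⟩ :=
      isRoot_charpoly_of_sub_rootProjection hq hqτ hv (mul_ne_zero hτ hz0) h
    have hlt := hroots _ hroot fun h' => hne (by rw [h'])
    rw [norm_mul] at hlt
    exact lt_of_mul_lt_mul_left (by simpa using hlt) (norm_nonneg τ)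
  refine ⟨rootProjection M τ q, (tendsto_add_atTop_iff_nat 1).mp ?_⟩
  simp_rw [inv_smul_pow_succ_eq_rootProjection_add hq hqτ hτ]
  have hlim := (tendsto_const_nhds (x := rootProjection M τ q)).add
    ((tendsto_add_atTop_iff_nat 1).mpr (tendsto_pow_nhds_zero_of_forall_norm_spectrum_lt_one B hB))
  rwa [add_zero] at hlim

end PowersConverge

theorem Matrix.exists_tendsto_inv_smul_pow_of_simple_dominant_root_real {n : Type*} [Fintype n]
    [DecidableEq n] {L : Matrix n n ℝ} {τ : ℝ} (hτ : τ ≠ 0)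
    (hmult : L.charpoly.rootMultiplicity τ = 1)
    (hroots : ∀ z : ℂ, (L.charpoly.map (algebraMap ℝ ℂ)).IsRoot z → z ≠ τ → ‖z‖ < |τ|) :
    ∃ Q, Tendsto (fun m : ℕ => (τ⁻¹ • L) ^ m) atTop (𝓝 Q) := by
  obtain ⟨Q, hQ⟩ := exists_tendsto_inv_smul_pow_of_simple_dominant_root
    (M := L.map (algebraMap ℝ ℂ)) (τ := τ) (Complex.ofReal_ne_zero.mpr hτ)
    (by
      rw [charpoly_map]
      exact (eq_rootMultiplicity_map (algebraMap ℝ ℂ).injective τ).symm.trans hmult)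
    (fun z hz hne => by
      rw [Complex.norm_real, Real.norm_eq_abs]
      exact hroots z (by rwa [charpoly_map] at hz) hne)
  have hpow : ∀ m : ℕ,
      (((τ : ℂ)⁻¹ • L.map (algebraMap ℝ ℂ)) ^ m).map Complex.re = (τ⁻¹ • L) ^ m := by
    intro m
    have hmap : (τ : ℂ)⁻¹ • L.map (algebraMap ℝ ℂ) = (algebraMap ℝ ℂ).mapMatrix (τ⁻¹ • L) := by
      ext; simp
    rw [hmap, ← map_pow]
    ext; simp
  exact ⟨Q.map Complex.re,
    (((continuous_id.matrix_map Complex.continuous_re).tendsto Q).comp hQ).congr hpow⟩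

theorem mul_limit_eq_of_tendsto_pow {R : Type*} [Monoid R] [TopologicalSpace R] [T2Space R]
    [ContinuousMul R] {a Q : R} (h : Tendsto (a ^ ·) atTop (𝓝 Q)) : a * Q = Q :=
  tendsto_nhds_unique ((h.const_mul a).congr fun m => (pow_succ' a m).symm)
    ((tendsto_add_atTop_iff_nat 1).mpr h)

theorem limit_mul_eq_of_tendsto_pow {R : Type*} [Monoid R] [TopologicalSpace R] [T2Space R]
    [ContinuousMul R] {a Q : R} (h : Tendsto (a ^ ·) atTop (𝓝 Q)) : Q * a = Q :=
  tendsto_nhds_unique ((h.mul_const a).congr fun m => (pow_succ a m).symm)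
    ((tendsto_add_atTop_iff_nat 1).mpr h)

theorem IsCyclicVec.mulVec_eq_zero_of_mul_eq_smul {k : ℕ} {L Q : Matrix (Fin k) (Fin k) ℝ}
    {x0 : Fin k → ℝ} (hx0 : IsCyclicVec L x0) {c : ℝ} (hQL : Q * L = c • Q)
    (hQx0 : Q *ᵥ x0 = 0) (w : Fin k → ℝ) : Q *ᵥ w = 0 := by
  have hpow : ∀ j : ℕ, Q * L ^ j = c ^ j • Q := by
    intro j
    induction j with
    | zero => simp
    | succ j ih => rw [pow_succ, ← mul_assoc, ih, smul_mul_assoc, hQL, smul_smul, pow_succ]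
  have hspan : Submodule.span ℝ (Set.range fun j : Fin k => (L ^ (j : ℕ)) *ᵥ x0) ≤
      LinearMap.ker (mulVecLin Q) := by
    rw [Submodule.span_le]
    rintro _ ⟨j, rfl⟩
    simp [mulVec_mulVec, hpow, smul_mulVec, hQx0]
  rw [hx0, top_le_iff, LinearMap.ker_eq_top] at hspan
  simpa using LinearMap.congr_fun hspan w

theorem StrongPerronFrobenius.pos_of_mulVec_eq_smul {k : ℕ} {L : Matrix (Fin k) (Fin k) ℝ}
    {τ : ℝ} (hL : StrongPerronFrobenius L τ) {y : Fin k → ℝ} (hy : L *ᵥ y = τ • y)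
    (hy0 : y ≠ 0) (hnonneg : ∀ i, 0 ≤ y i) (i : Fin k) : 0 < y i := by
  obtain ⟨-, hmult, -, u, hu, huL⟩ := hL
  obtain ⟨c, rfl⟩ := Matrix.exists_eq_smul_of_rootMultiplicity_le_one_s18 hmult.le
    (fun h => (hu i).ne' (by simp [h])) huL hy
  have hc0 : c ≠ 0 := by rintro rfl; exact hy0 (zero_smul ℝ u)
  have hci := hnonneg i
  simp only [Pi.smul_apply, smul_eq_mul] at hci ⊢
  exact mul_pos ((nonneg_of_mul_nonneg_left hci (hu i)).lt_of_ne' hc0) (hu i)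

theorem StrongPerronFrobenius.exists_tendsto_pow_mulVec_div_pow {k : ℕ}
    {L : Matrix (Fin k) (Fin k) ℝ} {τ : ℝ} (hL : StrongPerronFrobenius L τ) {x0 : Fin k → ℝ}
    (hx0 : IsCyclicVec L x0) (hnonneg : ∀ n : ℕ, ∀ i, 0 ≤ (L ^ n *ᵥ x0) i) :
    ∃ y : Fin k → ℝ, (∀ i, 0 < y i) ∧
      ∀ i, Tendsto (fun n : ℕ => (L ^ n *ᵥ x0) i / τ ^ n) atTop (𝓝 (y i)) := by
  obtain ⟨hτ, hmult, hroots, u, hu, huL⟩ := id hL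
  obtain ⟨Q, hQ⟩ := Matrix.exists_tendsto_inv_smul_pow_of_simple_dominant_root_real hτ.ne' hmult
    (by simpa only [abs_of_pos hτ] using hroots)
  have hlim : ∀ v i, Tendsto (fun n : ℕ => (L ^ n *ᵥ v) i / τ ^ n) atTop (𝓝 ((Q *ᵥ v) i)) := by
    intro v i
    refine (((continuous_apply i).comp (continuous_id.matrix_mulVec continuous_const)).tendsto
      Q |>.comp hQ).congr fun n => ?_
    dsimp only [Function.comp_apply, id]
    rw [_root_.smul_pow, inv_pow, smul_mulVec, Pi.smul_apply, smul_eq_mul, div_eq_inv_mul]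
  have hQL : Q * L = τ • Q := by
    have := limit_mul_eq_of_tendsto_pow hQ
    rwa [mul_smul_comm, inv_smul_eq_iff₀ hτ.ne'] at this
  have hLy : L *ᵥ (Q *ᵥ x0) = τ • (Q *ᵥ x0) := by
    have := mul_limit_eq_of_tendsto_pow hQ
    rw [smul_mul_assoc, inv_smul_eq_iff₀ hτ.ne'] at this
    rw [mulVec_mulVec, this, smul_mulVec]
  have hQu : Q *ᵥ u = u := by
    funext i
    refine tendsto_nhds_unique (hlim u i) (tendsto_const_nhds.congr fun n => ?_)
    have hLnu : L ^ n *ᵥ u = τ ^ n • u := by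
      simpa using Matrix.aeval_mulVec_of_mulVec_eq_smul_s18 huL (X ^ n)
    rw [hLnu, Pi.smul_apply, smul_eq_mul, mul_div_cancel_left₀ _ (pow_ne_zero n hτ.ne')]
  refine ⟨Q *ᵥ x0, fun i => hL.pos_of_mulVec_eq_smul hLy ?_ (fun i => ?_) i, hlim x0⟩
  · intro hy0
    have := hx0.mulVec_eq_zero_of_mul_eq_smul hQL hy0 u
    exact (hu i).ne' (by rw [← hQu, this, Pi.zero_apply])
  · exact ge_of_tendsto' (hlim x0 i) fun n => div_nonneg (hnonneg n i) (pow_pos hτ n).le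

theorem tendsto_shift_div_shift_of_tendsto_div_pow {w : ℕ → ℝ} {τ c : ℝ} (hτ : τ ≠ 0)
    (hc : c ≠ 0) (h : Tendsto (fun n : ℕ => w n / τ ^ n) atTop (𝓝 c)) (a b : ℕ) :
    Tendsto (fun n : ℕ => w (n + a) / w (n + b)) atTop (𝓝 (τ ^ ((a : ℤ) - b))) := by
  have hab := ((h.comp (tendsto_add_atTop_nat a)).div (h.comp (tendsto_add_atTop_nat b))
    hc).mul_const (τ ^ ((a : ℤ) - b))
  rw [div_self hc, one_mul] at hab
  refine hab.congr fun n => ?_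
  dsimp only [Function.comp_apply, Pi.div_apply]
  rw [zpow_sub₀ hτ, zpow_natCast, zpow_natCast, pow_add, pow_add]
  field_simp

theorem tendsto_ciInf_of_forall_tendsto {ι α L : Type*} [Fintype ι] [Nonempty ι]
    [ConditionallyCompleteLattice L] [TopologicalSpace L] [ContinuousInf L] {l : Filter α}
    {f : ι → α → L} {A : L} (h : ∀ i, Tendsto (f i) l (𝓝 A)) :
    Tendsto (fun x => ⨅ i, f i x) l (𝓝 A) := by
  simpa [← Finset.inf'_univ_eq_ciInf] using
    Tendsto.finset_inf'_nhds_apply Finset.univ_nonempty fun i _ => h i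

theorem tendsto_ciSup_of_forall_tendsto {ι α L : Type*} [Fintype ι] [Nonempty ι]
    [ConditionallyCompleteLattice L] [TopologicalSpace L] [ContinuousSup L] {l : Filter α}
    {f : ι → α → L} {A : L} (h : ∀ i, Tendsto (f i) l (𝓝 A)) :
    Tendsto (fun x => ⨆ i, f i x) l (𝓝 A) := by
  simpa [← Finset.sup'_univ_eq_ciSup] using
    Tendsto.finset_sup'_nhds_apply Finset.univ_nonempty fun i _ => h i

/-- both the min and max bounds in the checking relations,
`min_l Mₙ(l,j)/Mₙ(l,j')` and `max_l Mₙ(l,j)/Mₙ(l,j')`, converge to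
`τ^{j'-j}`. -/
theorem checking_bounds_converge
    (k : ℕ) (L : Matrix (Fin k) (Fin k) ℝ) (τ : ℝ)
    (hL : StrongPerronFrobenius L τ)
    (x0 : Fin k → ℝ) (hx0 : IsCyclicVec L x0)
    (hpos : ∀ n : ℕ, ∀ i : Fin k, 0 < (L ^ n).mulVec x0 i)
    (j j' : Fin k) :
    Tendsto (fun n : ℕ =>
        ⨅ l : Fin k, codingMatrix L x0 n l j / codingMatrix L x0 n l j')
      atTop (nhds (τ ^ ((j' : ℤ) - (j : ℤ)))) ∧
    Tendsto (fun n : ℕ =>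
        ⨆ l : Fin k, codingMatrix L x0 n l j / codingMatrix L x0 n l j')
      atTop (nhds (τ ^ ((j' : ℤ) - (j : ℤ)))) := by
  obtain ⟨y, hy, hlim⟩ := hL.exists_tendsto_pow_mulVec_div_pow hx0 fun n i => (hpos n i).le
  have hexp : ((k - 1 - j : ℕ) : ℤ) - (k - 1 - j' : ℕ) = (j' : ℤ) - j := by omega
  have hratio : ∀ l, Tendsto (fun n : ℕ => codingMatrix L x0 n l j / codingMatrix L x0 n l j')
      atTop (𝓝 (τ ^ ((j' : ℤ) - j))) := fun l => hexp ▸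
    tendsto_shift_div_shift_of_tendsto_div_pow hL.1.ne' (hy l).ne' (hlim l) (k - 1 - j) (k - 1 - j')
  have : Nonempty (Fin k) := ⟨j⟩
  exact ⟨tendsto_ciInf_of_forall_tendsto hratio, tendsto_ciSup_of_forall_tendsto hratio⟩
end
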